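/- arXiv:2410.23974 — 2 statements merged into one kernel-verified Lean document; each statement's English description precedes it below -/
import Mathlib

section
/- Let V be a finite set, let μ be a fully supported probability measure on Ω = {−1,+1}^V, and let c : V × Ω → (0,∞) be flipping rates satisfying the reversibility condition c(x,σ) μ(σ) = c(x,σˣ) μ(σˣ) for all x, σ, and the bounds 0 < c_m ≤ c(x,σ) ≤ c_M. Then for every F : Ω → ℝ and every x ∈ V, the covariance admits the integral representation cov_μ(F, σ_x) = −∫₀^∞ E_μ[ σ_x · c(x,·) · (∇_x P_t F) ] dt, where P_t = exp(t𝓛) is the Glauber semigroup, (∇_x P_t F)(σ) = (P_t F)(σˣ) − (P_t F)(σ), and σ_x denotes the spin function σ ↦ σ(x); in particular the integral converges absolutely. -/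
open Finset

/-- Flip the spin of `σ` at site `x`. -/
def flipC {V : Type*} [DecidableEq V] (σ : V → Bool) (x : V) : V → Bool :=
  Function.update σ x (!σ x)

/-- The ±1 spin value of `σ` at site `x`. -/
def spinC {V : Type*} (σ : V → Bool) (x : V) : ℝ := if σ x then 1 else -1

/-- Expectation of `F` under the (discrete, not necessarily normalized) measure `μ`. -/
def Emean {V : Type*} [Fintype V] [DecidableEq V] (μ F : (V → Bool) → ℝ) : ℝ :=
  ∑ σ, μ σ * F σ

/-- The Glauber generator with flipping rates `c`. -/
def gen {V : Type*} [Fintype V] [DecidableEq V] (c : V → (V → Bool) → ℝ)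
    (F : (V → Bool) → ℝ) : (V → Bool) → ℝ :=
  fun σ => ∑ x, c x σ * (F (flipC σ x) - F σ)

/-- The Dirichlet form `D(F) = -E_μ[F ⬝ 𝓛F]`. -/
def dirichlet {V : Type*} [Fintype V] [DecidableEq V] (μ : (V → Bool) → ℝ)
    (c : V → (V → Bool) → ℝ) (F : (V → Bool) → ℝ) : ℝ :=
  - Emean μ (fun σ => F σ * gen c F σ)

/-- Entropy `Ent_μ(F) = E_μ[F log F] − E_μ[F] log E_μ[F]` (note `0 log 0 = 0` in Lean). -/
noncomputable def entropy {V : Type*} [Fintype V] [DecidableEq V] (μ F : (V → Bool) → ℝ) : ℝ :=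
  Emean μ (fun σ => F σ * Real.log (F σ)) - Emean μ F * Real.log (Emean μ F)

/-- Covariance under `μ`. -/
def covar {V : Type*} [Fintype V] [DecidableEq V] (μ F G : (V → Bool) → ℝ) : ℝ :=
  Emean μ (fun σ => F σ * G σ) - Emean μ F * Emean μ G

/-- Variance under `μ`. -/
def varM {V : Type*} [Fintype V] [DecidableEq V] (μ F : (V → Bool) → ℝ) : ℝ :=
  covar μ F F

/-- The Glauber generator as a linear map. -/
def genL {V : Type*} [Fintype V] [DecidableEq V] (c : V → (V → Bool) → ℝ) :
    ((V → Bool) → ℝ) →ₗ[ℝ] ((V → Bool) → ℝ) where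
  toFun := gen c
  map_add' F G := by
    funext σ
    simp only [gen, Pi.add_apply, ← Finset.sum_add_distrib]
    exact Finset.sum_congr rfl fun x _ => by ring
  map_smul' a F := by
    funext σ
    simp only [gen, Pi.smul_apply, smul_eq_mul, RingHom.id_apply, Finset.mul_sum]
    exact Finset.sum_congr rfl fun x _ => by ring

/-- The Glauber generator as a continuous linear map. -/
noncomputable def genCLM {V : Type*} [Fintype V] [DecidableEq V] (c : V → (V → Bool) → ℝ) :
    ((V → Bool) → ℝ) →L[ℝ] ((V → Bool) → ℝ) :=
  LinearMap.toContinuousLinearMap (genL c)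

/-- The Glauber semigroup `P_t = exp (t 𝓛)`. -/
noncomputable def heatSG {V : Type*} [Fintype V] [DecidableEq V] (c : V → (V → Bool) → ℝ)
    (t : ℝ) : ((V → Bool) → ℝ) →L[ℝ] ((V → Bool) → ℝ) :=
  NormedSpace.exp (t • genCLM c)

open MeasureTheory

open Filter Asymptotics Topology

/-!
Put `u t = E_μ[σ_x ⬝ P_t F]`. Reversibility makes `𝓛` symmetric in `L²(μ)`, so
`u' t = E_μ[σ_x ⬝ 𝓛 P_t F]`, and only the `x`-term of `𝓛` survives since `σ_x` is invariant
under flips at the other sites: `u'` is the integrand. Positive rates make the Dirichlet form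
vanish only on constants, so compactness of the unit sphere of mean-zero functions yields a
spectral gap, and Grönwall's inequality for `‖P_t F - E_μ F‖²_{L²(μ)}` gives exponential
convergence `P_t F → E_μ F`. Hence the integrand decays exponentially and
`∫₀^∞ u' = E_μ F ⬝ E_μ σ_x - E_μ[F σ_x] = -cov_μ(F, σ_x)`.
-/

lemma abs_spinC {V : Type*} (σ : V → Bool) (x : V) : |spinC σ x| = 1 := by
  unfold spinC; split <;> norm_num

section Flip

variable {V : Type*} [DecidableEq V]

@[simp]
lemma flipC_flipC (σ : V → Bool) (x : V) : flipC (flipC σ x) x = σ := by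
  simp [flipC]

lemma sum_comp_flipC [Fintype V] {M : Type*} [AddCommMonoid M] (x : V) (Φ : (V → Bool) → M) :
    ∑ σ, Φ (flipC σ x) = ∑ σ, Φ σ :=
  Equiv.sum_comp (Function.Involutive.toPerm _ fun σ => flipC_flipC σ x) Φ

lemma spinC_flipC_of_ne (σ : V → Bool) {x y : V} (h : x ≠ y) :
    spinC (flipC σ y) x = spinC σ x := by
  simp [spinC, flipC, Function.update_of_ne h]

lemma eq_of_forall_flipC_eq [Fintype V] {α : Type*} {G : (V → Bool) → α}
    (h : ∀ σ y, G (flipC σ y) = G σ) (σ τ : V → Bool) : G σ = G τ := by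
  have hupdate : ∀ σ y b, G (Function.update σ y b) = G σ := by
    intro σ y b
    by_cases hb : b = σ y
    · rw [hb, Function.update_eq_self]
    · rw [Bool.eq_not_iff.mpr hb]
      exact h σ y
  have hpiecewise : ∀ s : Finset V, G (s.piecewise τ σ) = G σ := by
    intro s
    induction s using Finset.induction_on with
    | empty => simp
    | insert a s _ ih => rw [Finset.piecewise_insert, hupdate, ih]
  simpa using (hpiecewise univ).symm

end Flip

def IsReversible {V : Type*} [DecidableEq V] (μ : (V → Bool) → ℝ)
    (c : V → (V → Bool) → ℝ) : Prop :=
  ∀ x σ, c x σ * μ σ = c x (flipC σ x) * μ (flipC σ x)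

section Reversible

variable {V : Type*} [Fintype V] [DecidableEq V] {μ : (V → Bool) → ℝ}
  {c : V → (V → Bool) → ℝ}

lemma sum_mul_rate_mul_grad (hrev : IsReversible μ c) (y : V) (G H : (V → Bool) → ℝ) :
    ∑ σ, μ σ * G σ * (c y σ * (H (flipC σ y) - H σ))
      = -(1 / 2) * ∑ σ, μ σ * c y σ * ((G (flipC σ y) - G σ) * (H (flipC σ y) - H σ)) := by
  have hswap : ∑ σ, μ σ * G σ * (c y σ * (H (flipC σ y) - H σ))
      = ∑ σ, μ σ * G (flipC σ y) * (c y σ * (H σ - H (flipC σ y))) := by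
    rw [← sum_comp_flipC y]
    refine sum_congr rfl fun σ _ => ?_
    rw [flipC_flipC]
    linear_combination (G (flipC σ y) * (H (flipC σ y) - H σ)) * hrev y σ
  have hdouble : ∑ σ, μ σ * G σ * (c y σ * (H (flipC σ y) - H σ))
      + ∑ σ, μ σ * G σ * (c y σ * (H (flipC σ y) - H σ))
      = -∑ σ, μ σ * c y σ * ((G (flipC σ y) - G σ) * (H (flipC σ y) - H σ)) := by
    nth_rw 2 [hswap]
    rw [← sum_add_distrib, ← sum_neg_distrib]
    exact sum_congr rfl fun σ _ => by ring
  linarith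

lemma emean_mul_gen (hrev : IsReversible μ c) (G H : (V → Bool) → ℝ) :
    Emean μ (fun σ => G σ * gen c H σ)
      = ∑ y, -(1 / 2) * ∑ σ, μ σ * c y σ * ((G (flipC σ y) - G σ) * (H (flipC σ y) - H σ)) := by
  simp_rw [← sum_mul_rate_mul_grad hrev, Emean, gen, mul_sum, ← mul_assoc]
  exact sum_comm

lemma emean_gen_eq_zero (hrev : IsReversible μ c) (H : (V → Bool) → ℝ) :
    Emean μ (gen c H) = 0 := by
  simpa using emean_mul_gen hrev 1 H

lemma dirichlet_eq (hrev : IsReversible μ c) (G : (V → Bool) → ℝ) :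
    dirichlet μ c G = 1 / 2 * ∑ y, ∑ σ, μ σ * c y σ * (G (flipC σ y) - G σ) ^ 2 := by
  rw [dirichlet, emean_mul_gen hrev, mul_sum, ← sum_neg_distrib]
  refine sum_congr rfl fun y _ => ?_
  rw [mul_sum, mul_sum, ← sum_neg_distrib]
  exact sum_congr rfl fun σ _ => by ring

lemma emean_spinC_mul_gen (hrev : IsReversible μ c) (x : V) (H : (V → Bool) → ℝ) :
    Emean μ (fun σ => spinC σ x * gen c H σ)
      = Emean μ (fun σ => spinC σ x * c x σ * (H (flipC σ x) - H σ)) := by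
  rw [emean_mul_gen hrev, sum_eq_single x]
  · rw [← sum_mul_rate_mul_grad hrev x (fun σ => spinC σ x) H]
    exact sum_congr rfl fun σ _ => by ring
  · intro y _ hyx
    simp [spinC_flipC_of_ne _ hyx.symm]
  · simp

end Reversible

section SpectralGap

variable {V : Type*} [Fintype V] [DecidableEq V] {μ : (V → Bool) → ℝ}
  {c : V → (V → Bool) → ℝ}

lemma dirichlet_nonneg (hμ : ∀ σ, 0 ≤ μ σ) (hc : ∀ x σ, 0 ≤ c x σ) (hrev : IsReversible μ c)
    (G : (V → Bool) → ℝ) : 0 ≤ dirichlet μ c G := by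
  rw [dirichlet_eq hrev]
  exact mul_nonneg (by norm_num) <| sum_nonneg fun y _ => sum_nonneg fun σ _ =>
    mul_nonneg (mul_nonneg (hμ σ) (hc y σ)) (sq_nonneg _)

lemma dirichlet_smul (a : ℝ) (G : (V → Bool) → ℝ) :
    dirichlet μ c (a • G) = a ^ 2 * dirichlet μ c G := by
  have hgen : gen c (a • G) = a • gen c G := (genL c).map_smul a G
  simp only [dirichlet, Emean, hgen, Pi.smul_apply, smul_eq_mul]
  rw [← sum_neg_distrib, ← sum_neg_distrib, mul_sum]
  exact sum_congr rfl fun σ _ => by ring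

lemma continuous_dirichlet : Continuous (dirichlet μ c) := by
  have hgen : Continuous (gen c) := (genCLM c).continuous
  unfold dirichlet Emean
  fun_prop

lemma eq_zero_of_dirichlet_eq_zero (hμ : ∀ σ, 0 < μ σ) (hμ1 : ∑ σ, μ σ = 1)
    (hc : ∀ x σ, 0 < c x σ) (hrev : IsReversible μ c) {G : (V → Bool) → ℝ}
    (hG : Emean μ G = 0) (hD : dirichlet μ c G = 0) : G = 0 := by
  have hnonneg : ∀ y σ, 0 ≤ μ σ * c y σ * (G (flipC σ y) - G σ) ^ 2 := fun y σ =>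
    mul_nonneg (mul_pos (hμ σ) (hc y σ)).le (sq_nonneg _)
  rw [dirichlet_eq hrev, mul_eq_zero, or_iff_right (by norm_num),
    sum_eq_zero_iff_of_nonneg fun y _ => sum_nonneg fun σ _ => hnonneg y σ] at hD
  have hterm : ∀ y σ, μ σ * c y σ * (G (flipC σ y) - G σ) ^ 2 = 0 := fun y σ =>
    (sum_eq_zero_iff_of_nonneg fun σ _ => hnonneg y σ).mp (hD y (mem_univ y)) σ (mem_univ σ)
  have hflip : ∀ σ y, G (flipC σ y) = G σ := fun σ y => by
    have := hterm y σ
    rw [mul_eq_zero, pow_eq_zero_iff two_ne_zero, sub_eq_zero] at this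
    exact this.resolve_left (mul_pos (hμ σ) (hc y σ)).ne'
  funext σ
  rw [Pi.zero_apply, ← hG, Emean]
  simp_rw [eq_of_forall_flipC_eq hflip _ σ, ← sum_mul, hμ1, one_mul]

lemma emean_sq_le_norm_sq (hμ : ∀ σ, 0 ≤ μ σ) (hμ1 : ∑ σ, μ σ = 1) (G : (V → Bool) → ℝ) :
    Emean μ (fun σ => G σ ^ 2) ≤ ‖G‖ ^ 2 := by
  calc Emean μ (fun σ => G σ ^ 2) ≤ ∑ σ, μ σ * ‖G‖ ^ 2 := by
        refine sum_le_sum fun σ _ => mul_le_mul_of_nonneg_left ?_ (hμ σ)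
        have := pow_le_pow_left₀ (norm_nonneg _) (norm_le_pi_norm G σ) 2
        rwa [Real.norm_eq_abs, sq_abs] at this
    _ = ‖G‖ ^ 2 := by rw [← sum_mul, hμ1, one_mul]

lemma exists_spectral_gap (hμ : ∀ σ, 0 < μ σ) (hμ1 : ∑ σ, μ σ = 1) (hc : ∀ x σ, 0 < c x σ)
    (hrev : IsReversible μ c) :
    ∃ γ, 0 < γ ∧ ∀ G, Emean μ G = 0 → γ * Emean μ (fun σ => G σ ^ 2) ≤ dirichlet μ c G := by
  set S := {G : (V → Bool) → ℝ | Emean μ G = 0} ∩ Metric.sphere 0 1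
  have hS : IsCompact S := by
    refine (isCompact_sphere 0 1).inter_left (isClosed_eq ?_ continuous_const)
    unfold Emean
    fun_prop
  obtain ⟨γ, hγ, hmin⟩ : ∃ γ, 0 < γ ∧ ∀ G ∈ S, γ ≤ dirichlet μ c G := by
    rcases S.eq_empty_or_nonempty with hempty | hne
    · exact ⟨1, one_pos, by simp [hempty]⟩
    obtain ⟨G₀, ⟨hG₀, hG₀norm⟩, hG₀min⟩ := hS.exists_isMinOn hne continuous_dirichlet.continuousOn
    refine ⟨dirichlet μ c G₀, ?_, hG₀min⟩
    refine (dirichlet_nonneg (fun σ => (hμ σ).le) (fun x σ => (hc x σ).le) hrev G₀).lt_of_ne' ?_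
    intro hD
    simp [eq_zero_of_dirichlet_eq_zero hμ hμ1 hc hrev hG₀ hD] at hG₀norm
  refine ⟨γ, hγ, fun G hG => ?_⟩
  rcases eq_or_ne G 0 with rfl | hG0
  · simp [dirichlet, Emean, gen]
  have hnorm : ‖G‖ ≠ 0 := norm_ne_zero_iff.mpr hG0
  have hGS : ‖G‖⁻¹ • G ∈ S := by
    refine ⟨?_, by simp [norm_smul, hnorm]⟩
    simp only [Set.mem_ofPred_eq, Emean, Pi.smul_apply, smul_eq_mul, mul_left_comm _ ‖G‖⁻¹,
      ← mul_sum]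
    rw [show ∑ σ, μ σ * G σ = 0 from hG, mul_zero]
  calc γ * Emean μ (fun σ => G σ ^ 2)
      ≤ ‖G‖ ^ 2 * dirichlet μ c (‖G‖⁻¹ • G) := by
        rw [mul_comm]
        exact mul_le_mul (emean_sq_le_norm_sq (fun σ => (hμ σ).le) hμ1 G) (hmin _ hGS)
          hγ.le (sq_nonneg _)
    _ = dirichlet μ c G := by
        rw [dirichlet_smul, ← mul_assoc, inv_pow, mul_inv_cancel₀ (pow_ne_zero 2 hnorm), one_mul]

end SpectralGap

section Semigroup

variable {V : Type*} [Fintype V] [DecidableEq V] {c : V → (V → Bool) → ℝ}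

@[simp]
lemma heatSG_zero (G : (V → Bool) → ℝ) : heatSG c 0 G = G := by
  simp [heatSG]

lemma hasDerivAt_heatSG (G : (V → Bool) → ℝ) (t : ℝ) :
    HasDerivAt (fun s => heatSG c s G) (gen c (heatSG c t G)) t :=
  (ContinuousLinearMap.apply ℝ ((V → Bool) → ℝ) G).hasFDerivAt.comp_hasDerivAt t
    (hasDerivAt_exp_smul_const' (genCLM c) t)

lemma continuous_heatSG (G : (V → Bool) → ℝ) : Continuous fun t => heatSG c t G :=
  continuous_iff_continuousAt.mpr fun t => (hasDerivAt_heatSG G t).continuousAt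

lemma gen_const (k : ℝ) : gen c (fun _ => k) = 0 := by
  funext σ
  simp [gen]

lemma heatSG_const (k t : ℝ) : heatSG c t (fun _ => k) = fun _ => k := by
  have hderiv : ∀ s, HasDerivAt (fun s => heatSG c s (fun _ => k)) 0 s := fun s => by
    have h := (ContinuousLinearMap.apply ℝ ((V → Bool) → ℝ) (fun _ => k)).hasFDerivAt
      |>.comp_hasDerivAt s (hasDerivAt_exp_smul_const (genCLM c) s)
    rwa [ContinuousLinearMap.apply_apply, mul_apply_eq_comp,
      show genCLM c (fun _ => k) = 0 from gen_const k, map_zero] at h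
  simpa using is_const_of_deriv_eq_zero (fun s => (hderiv s).differentiableAt)
    (fun s => (hderiv s).deriv) t 0

lemma hasDerivAt_emean_mul_heatSG (μ w G : (V → Bool) → ℝ) (t : ℝ) :
    HasDerivAt (fun s => Emean μ (fun σ => w σ * heatSG c s G σ))
      (Emean μ (fun σ => w σ * gen c (heatSG c t G) σ)) t := by
  unfold Emean
  exact HasDerivAt.fun_sum fun σ _ =>
    ((hasDerivAt_pi.mp (hasDerivAt_heatSG G t) σ).const_mul (w σ)).const_mul (μ σ)

lemma emean_heatSG {μ : (V → Bool) → ℝ} (hrev : IsReversible μ c) (G : (V → Bool) → ℝ) (t : ℝ) :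
    Emean μ (heatSG c t G) = Emean μ G := by
  have hderiv : ∀ s, HasDerivAt (fun s => Emean μ (fun σ => 1 * heatSG c s G σ)) 0 s := fun s => by
    simpa [emean_gen_eq_zero hrev] using hasDerivAt_emean_mul_heatSG (c := c) μ 1 G s
  simpa using is_const_of_deriv_eq_zero (fun s => (hderiv s).differentiableAt)
    (fun s => (hderiv s).deriv) t 0

end Semigroup

section Decay

variable {V : Type*} [Fintype V] [DecidableEq V] {μ : (V → Bool) → ℝ}
  {c : V → (V → Bool) → ℝ}

lemma emean_sq_heatSG_le (hrev : IsReversible μ c) {γ : ℝ}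
    (hgap : ∀ G, Emean μ G = 0 → γ * Emean μ (fun σ => G σ ^ 2) ≤ dirichlet μ c G)
    {G : (V → Bool) → ℝ} (hG : Emean μ G = 0) {t : ℝ} (ht : 0 ≤ t) :
    Emean μ (fun σ => heatSG c t G σ ^ 2)
      ≤ Emean μ (fun σ => G σ ^ 2) * Real.exp (-(2 * γ) * t) := by
  set φ := fun s => Emean μ (fun σ => heatSG c s G σ ^ 2)
  have hφ : ∀ s, HasDerivAt φ (-(2 * dirichlet μ c (heatSG c s G))) s := fun s => by
    have h := HasDerivAt.fun_sum (u := univ) fun σ _ =>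
      ((hasDerivAt_pi.mp (hasDerivAt_heatSG (c := c) G s) σ).fun_pow 2).const_mul (μ σ)
    refine h.congr_deriv ?_
    rw [dirichlet, Emean, mul_neg, neg_neg, mul_sum]
    exact sum_congr rfl fun σ _ => by push_cast; ring
  have hbound : ∀ s, -(2 * dirichlet μ c (heatSG c s G)) ≤ -(2 * γ) * φ s + 0 := fun s => by
    have := hgap _ ((emean_heatSG hrev G s).trans hG)
    linarith
  have h := le_gronwallBound_of_liminf_deriv_right_le (f := φ) (a := 0) (b := t)
    (fun s _ => (hφ s).continuousAt.continuousWithinAt)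
    (fun s _ _ hr => (hφ s).hasDerivWithinAt.liminf_right_slope_le hr) le_rfl
    (fun s _ => hbound s) t ⟨ht, le_rfl⟩
  simpa [φ, gronwallBound_ε0] using h

lemma norm_le_sqrt_emean_sq_div {m : ℝ} (hm : 0 < m) (hμm : ∀ σ, m ≤ μ σ)
    (G : (V → Bool) → ℝ) : ‖G‖ ≤ Real.sqrt (Emean μ (fun σ => G σ ^ 2) / m) := by
  refine (pi_norm_le_iff_of_nonneg (Real.sqrt_nonneg _)).mpr fun σ => ?_
  rw [Real.norm_eq_abs]
  refine Real.abs_le_sqrt ((le_div_iff₀ hm).mpr ?_)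
  calc G σ ^ 2 * m ≤ μ σ * G σ ^ 2 := by nlinarith [hμm σ, sq_nonneg (G σ)]
    _ ≤ Emean μ (fun σ => G σ ^ 2) :=
        single_le_sum (f := fun σ => μ σ * G σ ^ 2)
          (fun τ _ => mul_nonneg (hm.le.trans (hμm τ)) (sq_nonneg _)) (mem_univ σ)

lemma exists_isBigO_heatSG_sub_emean (hμ : ∀ σ, 0 < μ σ) (hμ1 : ∑ σ, μ σ = 1)
    (hc : ∀ x σ, 0 < c x σ) (hrev : IsReversible μ c) (F : (V → Bool) → ℝ) :
    ∃ γ, 0 < γ ∧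
      (fun t => heatSG c t F - fun _ => Emean μ F) =O[atTop] fun t => Real.exp (-γ * t) := by
  obtain ⟨γ, hγ, hgap⟩ := exists_spectral_gap hμ hμ1 hc hrev
  obtain ⟨σ₀, -, hσ₀⟩ := exists_min_image univ μ univ_nonempty
  set G := F - fun _ => Emean μ F
  have hG : Emean μ G = 0 := by
    simp only [G, Emean, Pi.sub_apply, mul_sub, sum_sub_distrib, ← sum_mul, hμ1, one_mul, sub_self]
  have hPG : ∀ t, heatSG c t F - (fun _ => Emean μ F) = heatSG c t G := fun t => by
    rw [map_sub, heatSG_const]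
  refine ⟨γ, hγ, IsBigO.of_bound (Real.sqrt (Emean μ (fun σ => G σ ^ 2) / μ σ₀)) ?_⟩
  filter_upwards [eventually_ge_atTop 0] with t ht
  have hexp : Real.exp (-(2 * γ) * t) = Real.exp (-γ * t) ^ 2 := by
    rw [← Real.exp_nat_mul]; ring_nf
  rw [hPG, Real.norm_of_nonneg (Real.exp_pos _).le]
  calc ‖heatSG c t G‖ ≤ Real.sqrt (Emean μ (fun σ => heatSG c t G σ ^ 2) / μ σ₀) :=
        norm_le_sqrt_emean_sq_div (hμ σ₀) (fun σ => hσ₀ σ (mem_univ σ)) _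
    _ ≤ Real.sqrt (Emean μ (fun σ => G σ ^ 2) * Real.exp (-(2 * γ) * t) / μ σ₀) :=
        Real.sqrt_le_sqrt (div_le_div_of_nonneg_right (emean_sq_heatSG_le hrev hgap hG ht)
          (hμ σ₀).le)
    _ = Real.sqrt (Emean μ (fun σ => G σ ^ 2) / μ σ₀) * Real.exp (-γ * t) := by
        rw [hexp, mul_div_right_comm, Real.sqrt_mul' _ (sq_nonneg _),
          Real.sqrt_sq (Real.exp_pos _).le]

end Decay

lemma integrableOn_Ioi_and_integral_eq_of_isBigO_exp {u f : ℝ → ℝ} {l γ : ℝ} (hγ : 0 < γ)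
    (hu : ∀ t, HasDerivAt u (f t) t) (hf : Continuous f)
    (hfO : f =O[atTop] fun t => Real.exp (-γ * t))
    (huO : (fun t => u t - l) =O[atTop] fun t => Real.exp (-γ * t)) :
    IntegrableOn f (Set.Ioi 0) ∧ ∫ t in Set.Ioi 0, f t = l - u 0 := by
  have hexp : Tendsto (fun t => Real.exp (-γ * t)) atTop (𝓝 0) :=
    Real.tendsto_exp_atBot.comp (tendsto_id.const_mul_atTop_of_neg (neg_lt_zero.mpr hγ))
  have hint : IntegrableOn f (Set.Ioi 0) := integrable_of_isBigO_exp_neg hγ hf.continuousOn hfO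
  exact ⟨hint, integral_Ioi_of_hasDerivAt_of_tendsto' (fun t _ => hu t) hint
    (tendsto_sub_nhds_zero_iff.mp (huO.trans_tendsto hexp))⟩

section Bounds

variable {V : Type*} [Fintype V] [DecidableEq V] {μ : (V → Bool) → ℝ}

lemma abs_emean_mul_le_norm (hμ : ∀ σ, 0 ≤ μ σ) (hμ1 : ∑ σ, μ σ = 1) {w : (V → Bool) → ℝ}
    (hw : ∀ σ, |w σ| ≤ 1) (H : (V → Bool) → ℝ) :
    |Emean μ (fun σ => w σ * H σ)| ≤ ‖H‖ :=
  calc |Emean μ (fun σ => w σ * H σ)| ≤ ∑ σ, μ σ * ‖H‖ := by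
        refine (abs_sum_le_sum_abs _ _).trans (sum_le_sum fun σ _ => ?_)
        rw [abs_mul, abs_of_nonneg (hμ σ), abs_mul, ← Real.norm_eq_abs (H σ)]
        exact mul_le_mul_of_nonneg_left
          (mul_le_of_le_one_left (norm_nonneg _) (hw σ) |>.trans (norm_le_pi_norm H σ)) (hμ σ)
    _ = ‖H‖ := by rw [← sum_mul, hμ1, one_mul]

lemma abs_emean_mul_sub_le (hμ : ∀ σ, 0 ≤ μ σ) (hμ1 : ∑ σ, μ σ = 1) {w : (V → Bool) → ℝ}
    (hw : ∀ σ, |w σ| ≤ 1) (H : (V → Bool) → ℝ) (k : ℝ) :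
    |Emean μ (fun σ => w σ * H σ) - k * Emean μ w| ≤ ‖H - fun _ => k‖ := by
  convert abs_emean_mul_le_norm hμ hμ1 hw (H - fun _ => k) using 2
  simp only [Emean, Pi.sub_apply, mul_sub, sum_sub_distrib, mul_sum]
  exact congrArg _ (sum_congr rfl fun σ _ => by ring)

lemma abs_emean_spinC_mul_rate_mul_grad_le (hμ : ∀ σ, 0 ≤ μ σ) (hμ1 : ∑ σ, μ σ = 1)
    {c : V → (V → Bool) → ℝ} (hrev : IsReversible μ c) (x : V) (H : (V → Bool) → ℝ) (k : ℝ) :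
    |Emean μ (fun σ => spinC σ x * c x σ * (H (flipC σ x) - H σ))|
      ≤ ‖genCLM c‖ * ‖H - fun _ => k‖ := by
  have hgen : gen c H = genCLM c (H - fun _ => k) := by
    rw [map_sub, show genCLM c (fun _ => k) = 0 from gen_const k, sub_zero]
    rfl
  rw [← emean_spinC_mul_gen hrev, hgen]
  exact (abs_emean_mul_le_norm hμ hμ1 (fun σ => (abs_spinC σ x).le) _).trans
    ((genCLM c).le_opNorm _)

end Bounds

theorem covariance_integral_representation_general
    {V : Type*} [Fintype V] [DecidableEq V]
    (μ : (V → Bool) → ℝ) (hμpos : ∀ σ, 0 < μ σ) (hμ1 : ∑ σ, μ σ = 1)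
    (c : V → (V → Bool) → ℝ) (hcpos : ∀ x σ, 0 < c x σ)
    (hrev : ∀ x σ, c x σ * μ σ = c x (flipC σ x) * μ (flipC σ x))
    (F : (V → Bool) → ℝ) (x : V) :
    MeasureTheory.IntegrableOn
        (fun t : ℝ => Emean μ
          (fun σ => spinC σ x * c x σ * (heatSG c t F (flipC σ x) - heatSG c t F σ)))
        (Set.Ioi 0) ∧
      covar μ F (fun σ => spinC σ x)
        = - ∫ t in Set.Ioi (0 : ℝ), Emean μ
            (fun σ => spinC σ x * c x σ * (heatSG c t F (flipC σ x) - heatSG c t F σ)) := by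
  obtain ⟨γ, hγ, hdecay⟩ := exists_isBigO_heatSG_sub_emean hμpos hμ1 hcpos hrev F
  have hμ := fun σ => (hμpos σ).le
  have hu : ∀ t, HasDerivAt (fun s => Emean μ (fun σ => spinC σ x * heatSG c s F σ))
      (Emean μ (fun σ => spinC σ x * c x σ * (heatSG c t F (flipC σ x) - heatSG c t F σ))) t :=
    fun t => (hasDerivAt_emean_mul_heatSG μ _ F t).congr_deriv (emean_spinC_mul_gen hrev x _)
  have hcont := continuous_heatSG (c := c) F
  obtain ⟨hint, hintegral⟩ := integrableOn_Ioi_and_integral_eq_of_isBigO_exp hγ hu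
    (by unfold Emean; fun_prop)
    ((IsBigO.of_bound _ (Eventually.of_forall fun t =>
      abs_emean_spinC_mul_rate_mul_grad_le hμ hμ1 hrev x _ (Emean μ F))).trans hdecay)
    ((IsBigO.of_bound' (Eventually.of_forall fun t =>
      abs_emean_mul_sub_le hμ hμ1 (fun σ => (abs_spinC σ x).le) _ (Emean μ F))).trans hdecay)
  refine ⟨hint, ?_⟩
  rw [hintegral]
  simp [covar, Emean, mul_comm]

/-- Integral representation of the covariance along the Glauber semigroup:
`cov_μ(F, σ_x) = −∫₀^∞ E_μ[σ_x ⋅ c(x,·) ⋅ ∇ₓ P_t F] dt`, the integral converging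
absolutely. -/
theorem covariance_integral_representation
    {V : Type*} [Fintype V] [DecidableEq V]
    (μ : (V → Bool) → ℝ) (hμpos : ∀ σ, 0 < μ σ) (hμ1 : ∑ σ, μ σ = 1)
    (c : V → (V → Bool) → ℝ) (hcpos : ∀ x σ, 0 < c x σ)
    (cm cM : ℝ) (hcm : 0 < cm) (hbd : ∀ x σ, cm ≤ c x σ ∧ c x σ ≤ cM)
    (hrev : ∀ x σ, c x σ * μ σ = c x (flipC σ x) * μ (flipC σ x))
    (F : (V → Bool) → ℝ) (x : V) :
    MeasureTheory.IntegrableOn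
        (fun t : ℝ => Emean μ
          (fun σ => spinC σ x * c x σ * (heatSG c t F (flipC σ x) - heatSG c t F σ)))
        (Set.Ioi 0) ∧
      covar μ F (fun σ => spinC σ x)
        = - ∫ t in Set.Ioi (0 : ℝ), Emean μ
            (fun σ => spinC σ x * c x σ * (heatSG c t F (flipC σ x) - heatSG c t F σ)) :=
  covariance_integral_representation_general μ hμpos hμ1 c hcpos hrev F x
end

section
/- Let n ≥ 1 and for each 1 ≤ i ≤ n let μᵢ be a probability measure on a finite set Sᵢ, and let μ = μ₁ ⊗ ⋯ ⊗ μₙ be the product measure on S = S₁ × ⋯ × Sₙ. Then for every F : S → ℝ, the Efron–Stein inequality holds: Var_μ(F) ≤ Σ_{i=1}^n E_μ[ Var_{μᵢ}(F) ], where Var_{μᵢ}(F)(x) denotes the variance of the function sᵢ ↦ F(x₁,…,x_{i−1}, sᵢ, x_{i+1},…,xₙ) under μᵢ with the other coordinates of x held fixed. -/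
open Finset

/-- Expectation of `G` under a (discrete) measure `ν` on a finite set. -/
def EmeanF {α : Type*} [Fintype α] (ν G : α → ℝ) : ℝ := ∑ a, ν a * G a

/-- Variance of `G` under a (discrete) measure `ν` on a finite set. -/
def VarF {α : Type*} [Fintype α] (ν G : α → ℝ) : ℝ :=
  EmeanF ν (fun a => G a ^ 2) - (EmeanF ν G) ^ 2

set_option linter.unusedSectionVars false

namespace EfronSteinAux

variable {n : ℕ} {S : Fin n → Type*} [∀ i, Fintype (S i)]

/-- Merge: coordinates `< K` from `x`, the rest from `y`. -/
def mg (K : ℕ) (x y : ∀ i, S i) : ∀ i, S i := fun i => if (i : ℕ) < K then x i else y i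

lemma mg_mg (K : ℕ) (x y : ∀ i, S i) : mg K (mg K x y) (mg K y x) = x := by
  funext i; unfold mg; by_cases h : (i : ℕ) < K <;> simp [h]

lemma mg_update_right (k : Fin n) (x y : ∀ i, S i) (s : S k) :
    mg (k : ℕ) x (Function.update y k s) = Function.update (mg (k : ℕ) x y) k s := by
  funext i
  by_cases h : i = k
  · subst h; simp [mg]
  · have h' : (i : ℕ) ≠ (k : ℕ) := fun hh => h (Fin.ext hh)
    simp [mg, Function.update_of_ne h]

lemma mg_update_left (k : Fin n) (x y : ∀ i, S i) (s : S k) :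
    mg ((k : ℕ) + 1) (Function.update x k s) y = Function.update (mg (k : ℕ) x y) k s := by
  funext i
  by_cases h : i = k
  · subst h; simp [mg]
  · have h' : (i : ℕ) ≠ (k : ℕ) := fun hh => h (Fin.ext hh)
    simp only [mg, Function.update_of_ne h]
    by_cases h2 : (i : ℕ) < (k : ℕ)
    · simp [h2, Nat.lt_succ_of_lt h2]
    · have h3 : ¬ (i : ℕ) < (k : ℕ) + 1 := by omega
      simp [h2, h3]

variable (μ : ∀ i, S i → ℝ)

/-- Product weight. -/
def Ph (x : ∀ i, S i) : ℝ := ∏ i, μ i (x i)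

lemma Ph_nonneg (hnn : ∀ i a, 0 ≤ μ i a) (x : ∀ i, S i) : 0 ≤ Ph μ x :=
  Finset.prod_nonneg fun i _ => hnn i (x i)

lemma sum_Ph (h1 : ∀ i, ∑ a, μ i a = 1) : ∑ x : ∀ i, S i, Ph μ x = 1 := by
  rw [show (∑ x : ∀ i, S i, Ph μ x) = ∏ i, ∑ a, μ i a from (Fintype.prod_sum _).symm]
  simp [h1]

lemma Ph_update (k : Fin n) (x : ∀ i, S i) (s : S k) :
    Ph μ (Function.update x k s) = μ k s * ∏ i ∈ univ.erase k, μ i (x i) := by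
  unfold Ph
  rw [← Finset.mul_prod_erase univ _ (mem_univ k)]
  congr 1
  · simp
  · refine Finset.prod_congr rfl fun i hi => ?_
    rw [Function.update_of_ne (Finset.ne_of_mem_erase hi)]

lemma Ph_swap (k : Fin n) (x : ∀ i, S i) (s : S k) :
    Ph μ x * μ k s = Ph μ (Function.update x k s) * μ k (x k) := by
  have hx : Ph μ x = μ k (x k) * ∏ i ∈ univ.erase k, μ i (x i) := by
    have := Ph_update μ k x (x k)
    rwa [Function.update_eq_self] at this
  rw [hx, Ph_update]; ring

/-- Marginalization in one coordinate. -/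
lemma marg (h1 : ∀ i, ∑ a, μ i a = 1) (k : Fin n) (φ : (∀ i, S i) → ℝ) :
    ∑ x, Ph μ x * φ x
      = ∑ x, Ph μ x * ∑ s, μ k s * φ (Function.update x k s) := by
  have hinv : Function.Involutive
      (fun p : (∀ i, S i) × S k => (Function.update p.1 k p.2, p.1 k)) := by
    intro p
    simp [Function.update_idem]
  let e := hinv.toPerm _
  have key : ∑ p : (∀ i, S i) × S k, Ph μ p.1 * (μ k p.2 * φ (Function.update p.1 k p.2))
      = ∑ p : (∀ i, S i) × S k, Ph μ p.1 * (μ k p.2 * φ p.1) := by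
    rw [← Equiv.sum_comp e
      (fun p : (∀ i, S i) × S k => Ph μ p.1 * (μ k p.2 * φ p.1))]
    refine Finset.sum_congr rfl fun p _ => ?_
    show Ph μ p.1 * (μ k p.2 * φ (Function.update p.1 k p.2))
      = Ph μ (Function.update p.1 k p.2) * (μ k (p.1 k) * φ (Function.update p.1 k p.2))
    rw [← mul_assoc, ← mul_assoc, Ph_swap μ k p.1 p.2]
  calc ∑ x, Ph μ x * φ x
      = ∑ x, Ph μ x * φ x * ∑ s, μ k s := by simp [h1 k]
    _ = ∑ p : (∀ i, S i) × S k, Ph μ p.1 * (μ k p.2 * φ p.1) := by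
        rw [Fintype.sum_prod_type]
        refine Finset.sum_congr rfl fun x _ => ?_
        rw [Finset.mul_sum]
        refine Finset.sum_congr rfl fun s _ => by ring
    _ = ∑ p : (∀ i, S i) × S k, Ph μ p.1 * (μ k p.2 * φ (Function.update p.1 k p.2)) := key.symm
    _ = ∑ x, Ph μ x * ∑ s, μ k s * φ (Function.update x k s) := by
        rw [Fintype.sum_prod_type]
        refine Finset.sum_congr rfl fun x _ => ?_
        rw [Finset.mul_sum]

lemma Ph_mg (K : ℕ) (x y : ∀ i, S i) :
    Ph μ (mg K x y) * Ph μ (mg K y x) = Ph μ x * Ph μ y := by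
  unfold Ph
  rw [← Finset.prod_mul_distrib, ← Finset.prod_mul_distrib]
  refine Finset.prod_congr rfl fun i _ => ?_
  unfold mg
  by_cases h : (i : ℕ) < K <;> simp [h, mul_comm]

/-- Transport: if `(x, y)` is a pair of independent samples of the product measure, then
`mg K x y` is a sample of the product measure. -/
lemma transport (h1 : ∀ i, ∑ a, μ i a = 1) (K : ℕ) (ψ : (∀ i, S i) → ℝ) :
    ∑ x, ∑ y, Ph μ x * Ph μ y * ψ (mg K x y) = ∑ z, Ph μ z * ψ z := by
  have hinv : Function.Involutive
      (fun p : (∀ i, S i) × (∀ i, S i) => (mg K p.1 p.2, mg K p.2 p.1)) := by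
    intro p; simp [mg_mg]
  let e := hinv.toPerm _
  have key : ∑ p : (∀ i, S i) × (∀ i, S i), Ph μ p.1 * Ph μ p.2 * ψ (mg K p.1 p.2)
      = ∑ p : (∀ i, S i) × (∀ i, S i), Ph μ p.1 * Ph μ p.2 * ψ p.1 := by
    rw [← Equiv.sum_comp e
      (fun p : (∀ i, S i) × (∀ i, S i) => Ph μ p.1 * Ph μ p.2 * ψ p.1)]
    refine Finset.sum_congr rfl fun p _ => ?_
    show Ph μ p.1 * Ph μ p.2 * ψ (mg K p.1 p.2)
      = Ph μ (mg K p.1 p.2) * Ph μ (mg K p.2 p.1) * ψ (mg K p.1 p.2)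
    rw [Ph_mg]
  calc ∑ x, ∑ y, Ph μ x * Ph μ y * ψ (mg K x y)
      = ∑ p : (∀ i, S i) × (∀ i, S i), Ph μ p.1 * Ph μ p.2 * ψ (mg K p.1 p.2) := by
        rw [Fintype.sum_prod_type]
    _ = ∑ p : (∀ i, S i) × (∀ i, S i), Ph μ p.1 * Ph μ p.2 * ψ p.1 := key
    _ = ∑ x, (Ph μ x * ψ x) * ∑ y, Ph μ y := by
        rw [Fintype.sum_prod_type]
        refine Finset.sum_congr rfl fun x _ => ?_
        rw [Finset.mul_sum]
        exact Finset.sum_congr rfl fun y _ => by ring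
    _ = ∑ z, Ph μ z * ψ z := by simp [sum_Ph μ h1]

/-- The Doob martingale: integrate out coordinates `≥ K`. -/
def Gk (F : (∀ i, S i) → ℝ) (K : ℕ) (x : ∀ i, S i) : ℝ :=
  ∑ y, Ph μ y * F (mg K x y)

lemma Gk_top (h1 : ∀ i, ∑ a, μ i a = 1) (F : (∀ i, S i) → ℝ) (x : ∀ i, S i) :
    Gk μ F n x = F x := by
  unfold Gk
  have : ∀ y : ∀ i, S i, mg n x y = x := by
    intro y; funext i; simp [mg, i.isLt]
  simp only [this, ← Finset.sum_mul, sum_Ph μ h1, one_mul]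

lemma Gk_bot (F : (∀ i, S i) → ℝ) (x : ∀ i, S i) :
    Gk μ F 0 x = EmeanF (Ph μ) F := by
  unfold Gk EmeanF
  refine Finset.sum_congr rfl fun y _ => ?_
  have h : mg 0 x y = y := by funext i; simp [mg]
  rw [h]

lemma Gk_succ (h1 : ∀ i, ∑ a, μ i a = 1) (F : (∀ i, S i) → ℝ) (k : Fin n) (x : ∀ i, S i) :
    Gk μ F (k : ℕ) x = ∑ s, μ k s * Gk μ F ((k : ℕ) + 1) (Function.update x k s) := by
  calc Gk μ F (k : ℕ) x
      = ∑ y, Ph μ y * ∑ s, μ k s * F (mg (k : ℕ) x (Function.update y k s)) :=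
        marg μ h1 k (fun y => F (mg (k : ℕ) x y))
    _ = ∑ y, ∑ s, Ph μ y * (μ k s * F (Function.update (mg (k : ℕ) x y) k s)) := by
        refine Finset.sum_congr rfl fun y _ => ?_
        rw [Finset.mul_sum]
        exact Finset.sum_congr rfl fun s _ => by rw [mg_update_right]
    _ = ∑ s, ∑ y, Ph μ y * (μ k s * F (Function.update (mg (k : ℕ) x y) k s)) :=
        Finset.sum_comm
    _ = ∑ s, μ k s * Gk μ F ((k : ℕ) + 1) (Function.update x k s) := by
        refine Finset.sum_congr rfl fun s _ => ?_
        unfold Gk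
        rw [Finset.mul_sum]
        refine Finset.sum_congr rfl fun y _ => ?_
        rw [mg_update_left]
        ring

lemma var_eq {α : Type*} [Fintype α] (ν G : α → ℝ) (h : ∑ a, ν a = 1) :
    VarF ν G = ∑ a, ν a * (G a - EmeanF ν G) ^ 2 := by
  have hc : ∀ a, ν a * (G a - EmeanF ν G) ^ 2
      = ν a * G a ^ 2 - 2 * EmeanF ν G * (ν a * G a) + (EmeanF ν G) ^ 2 * ν a := fun a => by ring
  calc VarF ν G
      = (∑ a, ν a * G a ^ 2) - 2 * EmeanF ν G * (∑ a, ν a * G a)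
          + (EmeanF ν G) ^ 2 * (∑ a, ν a) := by
        unfold VarF EmeanF; rw [h]; ring
    _ = ∑ a, (ν a * G a ^ 2 - 2 * EmeanF ν G * (ν a * G a) + (EmeanF ν G) ^ 2 * ν a) := by
        rw [Finset.sum_add_distrib, Finset.sum_sub_distrib, ← Finset.mul_sum, ← Finset.mul_sum]
    _ = ∑ a, ν a * (G a - EmeanF ν G) ^ 2 := by
        exact Finset.sum_congr rfl fun a _ => (hc a).symm

lemma jensen_sq {ι : Type*} [Fintype ι] (w c : ι → ℝ) (hw : ∀ y, 0 ≤ w y)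
    (hw1 : ∑ y, w y = 1) : (∑ y, w y * c y) ^ 2 ≤ ∑ y, w y * c y ^ 2 := by
  have h := Finset.sum_mul_sq_le_sq_mul_sq univ
    (fun y => Real.sqrt (w y)) (fun y => Real.sqrt (w y) * c y)
  have e1 : ∀ y : ι, Real.sqrt (w y) * (Real.sqrt (w y) * c y) = w y * c y := fun y => by
    rw [← mul_assoc, Real.mul_self_sqrt (hw y)]
  have e2 : ∀ y : ι, (Real.sqrt (w y)) ^ 2 = w y := fun y => Real.sq_sqrt (hw y)
  have e3 : ∀ y : ι, (Real.sqrt (w y) * c y) ^ 2 = w y * c y ^ 2 := fun y => by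
    rw [mul_pow, e2]
  simp only [e1, e2, e3] at h
  rwa [hw1, one_mul] at h

lemma var_convex {α ι : Type*} [Fintype α] [Fintype ι] (ν : α → ℝ)
    (hν : ∀ a, 0 ≤ ν a) (hν1 : ∑ a, ν a = 1) (w : ι → ℝ) (hw : ∀ y, 0 ≤ w y)
    (hw1 : ∑ y, w y = 1) (f : ι → α → ℝ) :
    VarF ν (fun a => ∑ y, w y * f y a) ≤ ∑ y, w y * VarF ν (f y) := by
  have hmean : EmeanF ν (fun a => ∑ y, w y * f y a) = ∑ y, w y * EmeanF ν (f y) := by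
    unfold EmeanF
    calc ∑ a, ν a * ∑ y, w y * f y a
        = ∑ a, ∑ y, w y * (ν a * f y a) := by
          refine Finset.sum_congr rfl fun a _ => ?_
          rw [Finset.mul_sum]; exact Finset.sum_congr rfl fun y _ => by ring
      _ = ∑ y, ∑ a, w y * (ν a * f y a) := Finset.sum_comm
      _ = ∑ y, w y * ∑ a, ν a * f y a := by
          refine Finset.sum_congr rfl fun y _ => (Finset.mul_sum _ _ _).symm
  rw [var_eq ν _ hν1]
  calc ∑ a, ν a * ((∑ y, w y * f y a) - EmeanF ν (fun a => ∑ y, w y * f y a)) ^ 2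
      = ∑ a, ν a * (∑ y, w y * (f y a - EmeanF ν (f y))) ^ 2 := by
        refine Finset.sum_congr rfl fun a _ => ?_
        congr 2
        rw [hmean, ← Finset.sum_sub_distrib]
        exact Finset.sum_congr rfl fun y _ => (mul_sub _ _ _).symm
    _ ≤ ∑ a, ν a * ∑ y, w y * (f y a - EmeanF ν (f y)) ^ 2 := by
        refine Finset.sum_le_sum fun a _ => ?_
        exact mul_le_mul_of_nonneg_left
          (jensen_sq w (fun y => f y a - EmeanF ν (f y)) hw hw1) (hν a)
    _ = ∑ y, w y * ∑ a, ν a * (f y a - EmeanF ν (f y)) ^ 2 := by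
        calc ∑ a, ν a * ∑ y, w y * (f y a - EmeanF ν (f y)) ^ 2
            = ∑ a, ∑ y, w y * (ν a * (f y a - EmeanF ν (f y)) ^ 2) := by
              refine Finset.sum_congr rfl fun a _ => ?_
              rw [Finset.mul_sum]; exact Finset.sum_congr rfl fun y _ => by ring
          _ = ∑ y, ∑ a, w y * (ν a * (f y a - EmeanF ν (f y)) ^ 2) := Finset.sum_comm
          _ = ∑ y, w y * ∑ a, ν a * (f y a - EmeanF ν (f y)) ^ 2 := by
              refine Finset.sum_congr rfl fun y _ => (Finset.mul_sum _ _ _).symm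
    _ = ∑ y, w y * VarF ν (f y) := by
        refine Finset.sum_congr rfl fun y _ => ?_
        rw [var_eq ν (f y) hν1]

end EfronSteinAux

open EfronSteinAux in
/-- **Efron–Stein inequality** for a finite product measure: `Var_μ(F) ≤ Σᵢ E_μ[Var_{μᵢ}(F)]`,
where `Var_{μᵢ}(F)` is the variance in the `i`-th coordinate with the others held fixed. -/
theorem efron_stein
    (n : ℕ) (hn : 1 ≤ n) (S : Fin n → Type*) [∀ i, Fintype (S i)]
    (μ : ∀ i, S i → ℝ) (hμnn : ∀ i a, 0 ≤ μ i a) (hμ1 : ∀ i, ∑ a, μ i a = 1)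
    (F : (∀ i, S i) → ℝ) :
    VarF (fun x : ∀ i, S i => ∏ i, μ i (x i)) F
      ≤ ∑ i, EmeanF (fun x : ∀ i, S i => ∏ i, μ i (x i))
          (fun x => VarF (μ i) (fun s => F (Function.update x i s))) := by
  classical
  have hPh : (fun x : ∀ i, S i => ∏ i, μ i (x i)) = Ph μ := rfl
  rw [hPh]
  set E2 : ℕ → ℝ := fun K => ∑ x, Ph μ x * (Gk μ F K x) ^ 2 with hE2
  have hVar : VarF (Ph μ) F = E2 n - E2 0 := by
    have hn' : E2 n = EmeanF (Ph μ) (fun a => F a ^ 2) := by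
      rw [hE2]; exact Finset.sum_congr rfl fun x _ => by rw [Gk_top μ hμ1]
    have h0 : E2 0 = (EmeanF (Ph μ) F) ^ 2 := by
      rw [hE2]
      simp only
      calc ∑ x, Ph μ x * (Gk μ F 0 x) ^ 2
          = ∑ x, Ph μ x * (EmeanF (Ph μ) F) ^ 2 := by
            exact Finset.sum_congr rfl fun x _ => by rw [Gk_bot]
        _ = (∑ x, Ph μ x) * (EmeanF (Ph μ) F) ^ 2 := by rw [Finset.sum_mul]
        _ = (EmeanF (Ph μ) F) ^ 2 := by rw [sum_Ph μ hμ1, one_mul]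
    rw [hn', h0]; rfl
  have hstep : ∀ k : Fin n, E2 ((k : ℕ) + 1) - E2 (k : ℕ)
      ≤ EmeanF (Ph μ) (fun x => VarF (μ k) (fun s => F (Function.update x k s))) := by
    intro k
    set B : (∀ i, S i) → ℝ := Gk μ F ((k : ℕ) + 1) with hB
    set A : (∀ i, S i) → ℝ := fun x => ∑ s, μ k s * B (Function.update x k s) with hA
    have hGA : ∀ x, Gk μ F (k : ℕ) x = A x := fun x => Gk_succ μ hμ1 F k x
    have hAup : ∀ (x : ∀ i, S i) (t : S k), A (Function.update x k t) = A x := by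
      intro x t
      rw [hA]
      exact Finset.sum_congr rfl fun s _ => by rw [Function.update_idem]
    have hAB : ∑ x, Ph μ x * (A x * B x) = ∑ x, Ph μ x * (A x * A x) := by
      rw [marg μ hμ1 k (fun x => A x * B x)]
      refine Finset.sum_congr rfl fun x _ => ?_
      congr 1
      calc ∑ s, μ k s * (A (Function.update x k s) * B (Function.update x k s))
          = ∑ s, A x * (μ k s * B (Function.update x k s)) := by
            refine Finset.sum_congr rfl fun s _ => by rw [hAup]; ring
        _ = A x * ∑ s, μ k s * B (Function.update x k s) := (Finset.mul_sum _ _ _).symm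
        _ = A x * A x := rfl
    have hdiff : E2 ((k : ℕ) + 1) - E2 (k : ℕ) = ∑ x, Ph μ x * (B x - A x) ^ 2 := by
      have hE2k : E2 (k : ℕ) = ∑ x, Ph μ x * (A x) ^ 2 := by
        rw [hE2]
        exact Finset.sum_congr rfl fun x _ => by rw [hGA]
      calc E2 ((k : ℕ) + 1) - E2 (k : ℕ)
          = (∑ x, Ph μ x * (B x) ^ 2) - 2 * (∑ x, Ph μ x * (A x * B x))
              + (∑ x, Ph μ x * (A x * A x)) := by
            rw [hE2k, hE2, hAB]
            have : ∀ x : ∀ i, S i, Ph μ x * A x ^ 2 = Ph μ x * (A x * A x) := fun x => by ring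
            simp only [this]
            ring
        _ = ∑ x, (Ph μ x * (B x) ^ 2 - 2 * (Ph μ x * (A x * B x)) + Ph μ x * (A x * A x)) := by
            rw [Finset.sum_add_distrib, Finset.sum_sub_distrib, ← Finset.mul_sum]
        _ = ∑ x, Ph μ x * (B x - A x) ^ 2 :=
            Finset.sum_congr rfl fun x _ => by ring
    have hvar : ∑ x, Ph μ x * (B x - A x) ^ 2
        = ∑ x, Ph μ x * VarF (μ k) (fun s => B (Function.update x k s)) := by
      rw [marg μ hμ1 k (fun x => (B x - A x) ^ 2)]
      refine Finset.sum_congr rfl fun x _ => ?_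
      congr 1
      rw [var_eq (μ k) _ (hμ1 k)]
      refine Finset.sum_congr rfl fun s _ => ?_
      congr 2
      rw [hAup x s]
      rfl
    have hjen : ∀ x : ∀ i, S i, VarF (μ k) (fun s => B (Function.update x k s))
        ≤ ∑ y, Ph μ y * VarF (μ k) (fun s => F (Function.update (mg (k : ℕ) x y) k s)) := by
      intro x
      have hBrep : (fun s => B (Function.update x k s))
          = fun s => ∑ y, Ph μ y * F (Function.update (mg (k : ℕ) x y) k s) := by
        funext s
        rw [hB]
        exact Finset.sum_congr rfl fun y _ => by rw [mg_update_left]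
      rw [hBrep]
      exact var_convex (μ k) (fun a => hμnn k a) (hμ1 k) (Ph μ) (Ph_nonneg μ hμnn)
        (sum_Ph μ hμ1) (fun y s => F (Function.update (mg (k : ℕ) x y) k s))
    have htrans : ∑ x, Ph μ x * ∑ y, Ph μ y
          * VarF (μ k) (fun s => F (Function.update (mg (k : ℕ) x y) k s))
        = EmeanF (Ph μ) (fun z => VarF (μ k) (fun s => F (Function.update z k s))) := by
      have h := transport μ hμ1 (k : ℕ)
        (fun z => VarF (μ k) (fun s => F (Function.update z k s)))
      rw [show EmeanF (Ph μ) (fun z => VarF (μ k) (fun s => F (Function.update z k s)))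
          = ∑ z, Ph μ z * VarF (μ k) (fun s => F (Function.update z k s)) from rfl, ← h]
      refine Finset.sum_congr rfl fun x _ => ?_
      rw [Finset.mul_sum]
      exact Finset.sum_congr rfl fun y _ => by ring
    calc E2 ((k : ℕ) + 1) - E2 (k : ℕ)
        = ∑ x, Ph μ x * VarF (μ k) (fun s => B (Function.update x k s)) := by
          rw [hdiff, hvar]
      _ ≤ ∑ x, Ph μ x * ∑ y, Ph μ y
            * VarF (μ k) (fun s => F (Function.update (mg (k : ℕ) x y) k s)) := by
          refine Finset.sum_le_sum fun x _ => ?_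
          exact mul_le_mul_of_nonneg_left (hjen x) (Ph_nonneg μ hμnn x)
      _ = EmeanF (Ph μ) (fun z => VarF (μ k) (fun s => F (Function.update z k s))) := htrans
  have htel : E2 n - E2 0 = ∑ i : Fin n, (E2 ((i : ℕ) + 1) - E2 (i : ℕ)) := by
    rw [Fin.sum_univ_eq_sum_range (fun K => E2 (K + 1) - E2 K) n,
      Finset.sum_range_sub (fun K => E2 K) n]
  rw [hVar, htel]
  exact Finset.sum_le_sum fun i _ => hstep i
end
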